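/- arXiv:1503.00572 — 2 statements merged into one kernel-verified Lean document; each statement's English description precedes it below -/
import Mathlib

section
/- Let C ⊆ V be independent in G. The set {δ_x : x ∈ C} ∪ {e_C^{{y}} : y ∈ V∖C} of |V| probability distributions is affinely independent, and its convex hull is a (|V|-1)-simplex contained in M(G,C). -/
/-- The polytope of `C`-modes of a graph `G`, inside the probability simplex. -/
def modePolytope {V : Type*} [Fintype V] (G : SimpleGraph V) (C : Set V) :
    Set (V → ℝ) :=
  {p | (∀ v, 0 ≤ p v) ∧ (∑ v, p v = 1) ∧ ∀ x ∈ C, ∀ y, G.Adj x y → p y ≤ p x}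

/-- The uniform probability distribution on a finite subset. -/
noncomputable def uniformOn {V : Type*} [DecidableEq V] (s : Finset V) : V → ℝ :=
  fun v => if v ∈ s then (s.card : ℝ)⁻¹ else 0

/-!
For independent `C`, every point is the uniform distribution on `{y} ∪ N_C({y})`. Such a set
contains, together with any vertex, all its neighbours in `C` (its vertices other than `y` lie
in `C` and so have none), so the uniform distribution on it lies in the convex set
`M(G,C)`. Listing `V ∖ C` before `C`, the matrix of the points is triangular with nonzero
diagonal, so they are linearly, hence affinely, independent.
-/

open Finset

theorem linearIndependent_of_triangular {ι R α : Type*} [Ring R] [NoZeroDivisors R] [Preorder α]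
    (v : ι → ι → R) (b : ι → α) (hdiag : ∀ i, v i i ≠ 0)
    (htri : ∀ i j, i ≠ j → v i j ≠ 0 → b i < b j) : LinearIndependent R v := by
  classical
  rw [linearIndependent_iff']
  intro s w hsum i hi
  by_contra hwi
  -- the coordinate at a support point of least rank only sees its own vector
  obtain ⟨k, hk, hmin⟩ := (s.filter (w · ≠ 0)).exists_minimalFor b ⟨i, mem_filter.2 ⟨hi, hwi⟩⟩
  rw [mem_filter] at hk
  have hcoord : ∑ j ∈ s, w j * v j k = w k * v k k := by
    refine sum_eq_single_of_mem k hk.1 fun j hj hjk => ?_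
    by_contra hne
    have hlt := htri j k hjk (right_ne_zero_of_mul hne)
    exact hlt.not_ge (hmin (mem_filter.2 ⟨hj, left_ne_zero_of_mul hne⟩) hlt.le)
  have hk0 : w k * v k k = 0 := by
    simpa [hcoord] using congrFun hsum k
  exact mul_ne_zero hk.2 (hdiag k) hk0

section UniformOn

variable {V : Type*} [DecidableEq V]

theorem uniformOn_nonneg (s : Finset V) (v : V) : 0 ≤ uniformOn s v := by
  unfold uniformOn; split_ifs <;> positivity

theorem uniformOn_ne_zero_iff {s : Finset V} {v : V} : uniformOn s v ≠ 0 ↔ v ∈ s := by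
  unfold uniformOn
  split_ifs with hv
  · simpa [hv] using (card_pos.2 ⟨v, hv⟩).ne'
  · simpa using hv

theorem uniformOn_mem_stdSimplex [Fintype V] {s : Finset V} (hs : s.Nonempty) :
    uniformOn s ∈ stdSimplex ℝ V := by
  refine ⟨uniformOn_nonneg s, ?_⟩
  simp only [uniformOn, sum_ite_mem, univ_inter, sum_const, nsmul_eq_mul]
  exact mul_inv_cancel₀ (Nat.cast_ne_zero.2 hs.card_pos.ne')

theorem uniformOn_le_uniformOn {s : Finset V} {x y : V} (h : y ∈ s → x ∈ s) :
    uniformOn s y ≤ uniformOn s x := by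
  by_cases hy : y ∈ s
  · simp [uniformOn, hy, h hy]
  · simpa [uniformOn, hy] using uniformOn_nonneg s x

end UniformOn

section ModePolytope

variable {V : Type*} [Fintype V] (G : SimpleGraph V) (C : Set V)

theorem modePolytope_eq_inter :
    modePolytope G C = stdSimplex ℝ V ∩ {p | ∀ x ∈ C, ∀ y, G.Adj x y → p y ≤ p x} := by
  ext p; simp [modePolytope, stdSimplex, and_assoc]

theorem convex_modePolytope : Convex ℝ (modePolytope G C) := by
  rw [modePolytope_eq_inter]
  refine (convex_stdSimplex ℝ V).inter fun p hp q hq a b ha hb _ x hx y hxy => ?_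
  simp only [Pi.add_apply, Pi.smul_apply, smul_eq_mul]
  gcongr
  exacts [hp x hx y hxy, hq x hx y hxy]

theorem uniformOn_mem_modePolytope [DecidableEq V] {s : Finset V} (hs : s.Nonempty)
    (hclosed : ∀ x ∈ C, ∀ y ∈ s, G.Adj x y → x ∈ s) : uniformOn s ∈ modePolytope G C := by
  rw [modePolytope_eq_inter]
  exact ⟨uniformOn_mem_stdSimplex hs,
    fun x hx y hxy => uniformOn_le_uniformOn fun hy => hclosed x hx y hy hxy⟩

end ModePolytope

section InsertNeighborsIn

variable {V : Type*} [DecidableEq V] (G : SimpleGraph V) [DecidableRel G.Adj] (C : Finset V)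

def insertNeighborsIn (y : V) : Finset V :=
  insert y (C.filter fun z => G.Adj z y)

variable {G C}

theorem mem_insertNeighborsIn_self (y : V) : y ∈ insertNeighborsIn G C y :=
  mem_insert_self _ _

theorem mem_insertNeighborsIn_of_ne {v y : V} (hv : v ∈ insertNeighborsIn G C y) (hne : v ≠ y) :
    v ∈ C ∧ G.Adj v y := by
  simpa [insertNeighborsIn, hne] using hv

theorem insertNeighborsIn_eq_singleton (hInd : ∀ x ∈ C, ∀ y ∈ C, ¬ G.Adj x y) {y : V}
    (hy : y ∈ C) : insertNeighborsIn G C y = {y} := by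
  refine eq_singleton_iff_unique_mem.2 ⟨mem_insertNeighborsIn_self y, fun v hv => ?_⟩
  by_contra hne
  obtain ⟨hvC, hadj⟩ := mem_insertNeighborsIn_of_ne hv hne
  exact hInd v hvC y hy hadj

theorem mem_insertNeighborsIn_of_adj (hInd : ∀ x ∈ C, ∀ y ∈ C, ¬ G.Adj x y) {x v y : V}
    (hx : x ∈ C) (hv : v ∈ insertNeighborsIn G C y) (hxv : G.Adj x v) :
    x ∈ insertNeighborsIn G C y := by
  by_cases hvy : v = y
  · subst hvy
    exact mem_insert_of_mem (mem_filter.2 ⟨hx, hxv⟩)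
  · exact absurd hxv (hInd x hx v (mem_insertNeighborsIn_of_ne hv hvy).1)

theorem linearIndependent_uniformOn_insertNeighborsIn
    (hInd : ∀ x ∈ C, ∀ y ∈ C, ¬ G.Adj x y) :
    LinearIndependent ℝ fun y => uniformOn (insertNeighborsIn G C y) := by
  refine linearIndependent_of_triangular _ (fun x => if x ∈ C then 1 else 0)
    (fun y => uniformOn_ne_zero_iff.2 (mem_insertNeighborsIn_self y)) fun y v hyv h => ?_
  obtain ⟨hvC, hadj⟩ := mem_insertNeighborsIn_of_ne (uniformOn_ne_zero_iff.1 h) (Ne.symm hyv)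
  have hyC : y ∉ C := fun hyC => hInd v hvC y hyC hadj
  simp [hvC, hyC]

end InsertNeighborsIn

/-- For an independent `C`, the family consisting of `δ_x` for `x ∈ C` and of the
uniform distributions on `{y} ∪ N_C({y})` for `y ∈ V∖C` is an affinely independent
family of `|V|` points whose convex hull is a `(|V|-1)`-simplex inside `M(G,C)`. -/
theorem affineIndependent_subsimplex_of_modePolytope {V : Type*} [Fintype V]
    [DecidableEq V] (G : SimpleGraph V) [DecidableRel G.Adj] (C : Finset V)
    (hInd : ∀ x ∈ C, ∀ y ∈ C, ¬ G.Adj x y)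
    (f : V → V → ℝ)
    (hf : ∀ x, f x = if x ∈ C then uniformOn {x}
        else uniformOn (insert x (C.filter fun z => G.Adj z x))) :
    AffineIndependent ℝ f ∧ convexHull ℝ (Set.range f) ⊆ modePolytope G ↑C := by
  obtain rfl : f = fun y => uniformOn (insertNeighborsIn G C y) := by
    funext y
    rw [hf]
    split_ifs with hy
    · rw [insertNeighborsIn_eq_singleton hInd hy]
    · rfl
  refine ⟨(linearIndependent_uniformOn_insertNeighborsIn hInd).affineIndependent,
    convexHull_min (Set.range_subset_iff.2 fun y => ?_) (convex_modePolytope G C)⟩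
  exact uniformOn_mem_modePolytope G C ⟨y, mem_insertNeighborsIn_self y⟩
    fun x hx v hv hxv => mem_insertNeighborsIn_of_adj hInd hx hv hxv
end

section
/- Let C ⊆ V be independent in G. For x ∈ V, let N_C(x) = {y ∈ C : y ∼ x} and f_C^x the uniform distribution on N_C(x) ∪ {x}. Then the strong mode polytope S(G,C) = {p ∈ Δ(V) : p_x ≥ Σ_{y∼x} p_y for all x ∈ C} is a (|V|-1)-simplex whose vertices are exactly the f_C^x, x ∈ V. -/
/-!
Consider the linear map `M λ = ∑ₓ λₓ f_C^x` on `ℝ^V`. At `v ∉ C` only `f_C^v` is nonzero, so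
`(M λ)ᵥ = λᵥ / |N_C(v) ∪ {v}|`; at `v ∈ C`, independence of `C` gives `f_C^v = δᵥ` and
`(M λ)ᵥ = λᵥ + ∑_{y ∼ v} (M λ)_y`. Hence `λ` can be read off from `M λ`, so `M` is a linear
automorphism, and `M λ` satisfies the mode inequality at `v ∈ C` exactly when `λᵥ ≥ 0`. As `M`
also preserves the total mass, it maps the standard simplex onto `S(G,C)`, and the basis vectors,
the vertices of the standard simplex, to the `f_C^x`.
-/

/-- The polytope of strong `C`-modes of a graph `G`, inside the probability
simplex. -/
def strongModePolytope {V : Type*} [Fintype V] (G : SimpleGraph V)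
    [DecidableRel G.Adj] (C : Set V) : Set (V → ℝ) :=
  {p | (∀ v, 0 ≤ p v) ∧ (∑ v, p v = 1) ∧
    ∀ x ∈ C, ∑ y ∈ G.neighborFinset x, p y ≤ p x}

open Finset

section StdSimplex

variable {𝕜 ι E : Type*} [Field 𝕜] [Fintype ι] [DecidableEq ι] [AddCommGroup E] [Module 𝕜 E]
  (e : (ι → 𝕜) ≃ₗ[𝕜] E)

theorem LinearEquiv.affineIndependent_apply_single :
    AffineIndependent 𝕜 fun i => e (Pi.single i 1) := by
  convert ((Pi.basisFun 𝕜 ι).map e).linearIndependent.affineIndependent with i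
  simp

variable [LinearOrder 𝕜] [IsStrictOrderedRing 𝕜]

theorem extremePoints_stdSimplex :
    (stdSimplex 𝕜 ι).extremePoints 𝕜 = Set.range fun i => Pi.single i 1 := by
  refine Set.Subset.antisymm ?_ ?_
  · rw [← convexHull_rangle_single_eq_stdSimplex]
    exact extremePoints_convexHull_subset
  rintro _ ⟨i, rfl⟩
  refine ⟨single_mem_stdSimplex 𝕜 i, fun x hx y hy ⟨a, b, ha, hb, _, hxy⟩ => ?_⟩
  have hx_off : ∀ j ≠ i, x j = 0 := by
    intro j hj
    have hxy_j := congr_fun hxy j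
    simp only [Pi.add_apply, Pi.smul_apply, smul_eq_mul, Pi.single_eq_of_ne hj] at hxy_j
    nlinarith [mul_nonneg ha.le (hx.1 j), mul_nonneg hb.le (hy.1 j), hx.1 j]
  have hx_i : x i = 1 := by
    rw [← hx.2, Fintype.sum_eq_single i hx_off]
  funext j
  rcases eq_or_ne j i with rfl | hj
  · simp [hx_i]
  · simp [hx_off j hj, hj]

theorem LinearEquiv.convexHull_range_apply_single :
    convexHull 𝕜 (Set.range fun i => e (Pi.single i 1)) = e '' stdSimplex 𝕜 ι := by
  rw [Set.range_comp' e, ← convexHull_rangle_single_eq_stdSimplex]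
  exact (e.toLinearMap.image_convexHull _).symm

theorem LinearEquiv.extremePoints_image_stdSimplex :
    (e '' stdSimplex 𝕜 ι).extremePoints 𝕜 = Set.range fun i => e (Pi.single i 1) := by
  rw [← image_extremePoints, extremePoints_stdSimplex, ← Set.range_comp]
  rfl

end StdSimplex

lemma sum_uniformOn {V : Type*} [Fintype V] [DecidableEq V] {s : Finset V} (hs : s.Nonempty) :
    ∑ v, uniformOn s v = 1 := by
  simp only [uniformOn]
  rw [sum_ite_mem, univ_inter, sum_const, nsmul_eq_mul,
    mul_inv_cancel₀ (by exact_mod_cast hs.card_pos.ne')]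

section ModeMap

variable {V : Type*} [DecidableEq V] (G : SimpleGraph V) [DecidableRel G.Adj] (C : Finset V)

def modeSupport (x : V) : Finset V := insert x (C.filter fun y => G.Adj y x)

variable {G C}

lemma mem_modeSupport {x v : V} : v ∈ modeSupport G C x ↔ v = x ∨ v ∈ C ∧ G.Adj v x := by
  simp [modeSupport]

lemma modeSupport_nonempty (x : V) : (modeSupport G C x).Nonempty :=
  insert_nonempty _ _

lemma modeSupport_of_mem (hInd : ∀ x ∈ C, ∀ y ∈ C, ¬ G.Adj x y) {x : V} (hx : x ∈ C) :
    modeSupport G C x = {x} := by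
  rw [modeSupport, filter_false_of_mem fun y hy => hInd y hy x hx, insert_empty]

variable (G C) [Fintype V]

noncomputable def modeMap : (V → ℝ) →ₗ[ℝ] V → ℝ :=
  Fintype.linearCombination ℝ fun x => uniformOn (modeSupport G C x)

variable {G C}

lemma modeMap_apply (l : V → ℝ) (v : V) :
    modeMap G C l v = ∑ z with v ∈ modeSupport G C z, l z / #(modeSupport G C z) := by
  simp [modeMap, Fintype.linearCombination_apply, uniformOn, sum_filter, div_eq_mul_inv]

lemma modeMap_apply_of_notMem {v : V} (hv : v ∉ C) (l : V → ℝ) :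
    modeMap G C l v = l v / #(modeSupport G C v) := by
  have hfiber : ({z | v ∈ modeSupport G C z} : Finset V) = {v} := by
    ext z
    simp [mem_modeSupport, hv, eq_comm]
  rw [modeMap_apply, hfiber, sum_singleton]

lemma modeMap_apply_of_mem (hInd : ∀ x ∈ C, ∀ y ∈ C, ¬ G.Adj x y) {v : V} (hv : v ∈ C)
    (l : V → ℝ) :
    modeMap G C l v = l v + ∑ y ∈ G.neighborFinset v, modeMap G C l y := by
  have hfiber : ({z | v ∈ modeSupport G C z} : Finset V) = insert v (G.neighborFinset v) := by
    ext z
    simp [mem_modeSupport, hv, eq_comm]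
  rw [modeMap_apply, hfiber, sum_insert (by simp), modeSupport_of_mem hInd hv, card_singleton,
    Nat.cast_one, div_one]
  refine congrArg _ (sum_congr rfl fun y hy => (modeMap_apply_of_notMem ?_ l).symm)
  exact fun hyC => hInd v hv y hyC ((G.mem_neighborFinset v y).1 hy)

lemma sum_modeMap (l : V → ℝ) : ∑ v, modeMap G C l v = ∑ v, l v := by
  simp only [modeMap, Fintype.linearCombination_apply, Finset.sum_apply, Pi.smul_apply,
    smul_eq_mul]
  rw [sum_comm]
  simp only [← mul_sum, sum_uniformOn (modeSupport_nonempty _), mul_one]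

lemma modeMap_injective (hInd : ∀ x ∈ C, ∀ y ∈ C, ¬ G.Adj x y) :
    Function.Injective (modeMap G C) := by
  rw [← LinearMap.ker_eq_bot, LinearMap.ker_eq_bot']
  intro l hl
  funext v
  by_cases hv : v ∈ C
  · simpa [hl] using (modeMap_apply_of_mem hInd hv l).symm
  · have hlv := congr_fun hl v
    rw [modeMap_apply_of_notMem hv] at hlv
    simpa [(modeSupport_nonempty v).card_pos.ne'] using hlv

theorem strongModePolytope_eq_image_modeMap (hInd : ∀ x ∈ C, ∀ y ∈ C, ¬ G.Adj x y) :
    strongModePolytope G C = modeMap G C '' stdSimplex ℝ V := by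
  ext p
  constructor
  · rintro ⟨hp_nonneg, hp_sum, hp_mode⟩
    obtain ⟨l, rfl⟩ := LinearMap.injective_iff_surjective.1 (modeMap_injective hInd) p
    refine ⟨l, ⟨fun v => ?_, by rwa [sum_modeMap] at hp_sum⟩, rfl⟩
    by_cases hv : v ∈ C
    · linarith [modeMap_apply_of_mem hInd hv l, hp_mode v hv]
    · have hcard : (0 : ℝ) < #(modeSupport G C v) := by
        exact_mod_cast (modeSupport_nonempty v).card_pos
      have hpv := hp_nonneg v
      rw [modeMap_apply_of_notMem hv, le_div_iff₀ hcard, zero_mul] at hpv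
      exact hpv
  · rintro ⟨l, ⟨hl_nonneg, hl_sum⟩, rfl⟩
    refine ⟨fun v => ?_, by rwa [sum_modeMap], fun v hv => ?_⟩
    · rw [modeMap_apply]
      exact sum_nonneg fun z _ => div_nonneg (hl_nonneg z) (Nat.cast_nonneg _)
    · linarith [modeMap_apply_of_mem hInd hv l, hl_nonneg v]

end ModeMap

/-- For an independent `C`, the strong mode polytope `S(G,C)` is a `(|V|-1)`-simplex
whose vertices are exactly the uniform distributions `f_C^x` on `N_C(x) ∪ {x}`,
`x ∈ V`. -/
theorem strongModePolytope_is_simplex {V : Type*} [Fintype V] [DecidableEq V]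
    (G : SimpleGraph V) [DecidableRel G.Adj] (C : Finset V)
    (hInd : ∀ x ∈ C, ∀ y ∈ C, ¬ G.Adj x y)
    (f : V → V → ℝ)
    (hf : ∀ x, f x = uniformOn (insert x (C.filter fun y => G.Adj y x))) :
    AffineIndependent ℝ f ∧
      strongModePolytope G ↑C = convexHull ℝ (Set.range f) ∧
      (strongModePolytope G ↑C).extremePoints ℝ = Set.range f := by
  let e := LinearEquiv.ofInjectiveEndo (modeMap G C) (modeMap_injective hInd)
  have hf_single : f = fun x => e (Pi.single x 1) := by
    funext x
    simp [e, modeMap, hf x, modeSupport]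
  have hpoly : strongModePolytope G C = e '' stdSimplex ℝ V :=
    strongModePolytope_eq_image_modeMap hInd
  rw [hpoly, hf_single]
  exact ⟨e.affineIndependent_apply_single, e.convexHull_range_apply_single.symm,
    e.extremePoints_image_stdSimplex⟩
end
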